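/- Let g be a complex semisimple Lie algebra with Cartan subalgebra h and root system Δ, and let B = {H₁,...,H_ℓ} ∪ {X_α : α ∈ Δ} be a Chevalley basis. Then for each root α the divided powers X_α^n/n! preserve the Z-span of B under the adjoint action: (ad X_α)^n/n! maps g_Z into g_Z for all n ≥ 0. -/

import Mathlib

/-!
Let `T = ad X_α`. On `H_i` and on `X_{-α}` the operator `T` vanishes after at most three steps,
and `T² X_{-α} = -2 X_α`, so the divided powers are visibly integral there. For any other root `β`,
whose `α`-string reaches down to `β - qα`, one gets `Tⁿ X_β = ±(q+1)(q+2)⋯(q+n) X_{β+nα}` or `0`,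
and `n!` divides this product. The chain `β, β + α, …` never passes through `-α` because no
multiple `mγ`, `m ≥ 2`, of a root `γ` is a root: for the largest such multiple the Jacobi identity
for `X_γ, X_{-γ}, X_{mγ}` would force `2m = ±(r+1)` with `r ≤ m - 2`.
-/

open Pointwise
open scoped Nat

section RootString

variable {V : Type*} [AddCommGroup V] {Δ : Finset V} {α β : V} {r r' : ℕ}

/-- The `r` of the relation `[X_α, X_β] = ±(r+1) X_{α+β}`: `β - jα` is a root for `j ≤ r`
but `β - (r+1)α` is not. -/
def IsStringDepth (Δ : Finset V) (α β : V) (r : ℕ) : Prop :=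
  (∀ j : ℕ, j ≤ r → β - j • α ∈ Δ) ∧ β - (r + 1) • α ∉ Δ

theorem exists_add_nsmul_notMem [IsAddTorsionFree V] (Δ : Finset V) (hα : α ≠ 0) (β : V) :
    ∃ j : ℕ, β + j • α ∉ Δ := by
  by_contra! hall
  have hinj : Function.Injective fun j : ℕ => β + j • α := by
    intro j j' h
    have h' : ((j : ℤ) - j') • α = 0 := by
      simp only [sub_smul, natCast_zsmul, add_left_cancel h, sub_self]
    have := (IsAddTorsionFree.zsmul_eq_zero_iff_left hα).mp h'
    omega
  exact (Set.infinite_of_injective_forall_mem hinj hall) Δ.finite_toSet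

theorem exists_isStringDepth [IsAddTorsionFree V] (hα : α ≠ 0) (hβ : β ∈ Δ) :
    ∃ r, IsStringDepth Δ α β r := by
  classical
  have hex : ∃ j : ℕ, β - (j + 1) • α ∉ Δ := by
    obtain ⟨j, hj⟩ := exists_add_nsmul_notMem Δ (neg_ne_zero.mpr hα) (β - α)
    exact ⟨j, by rwa [show β - (j + 1) • α = β - α + j • -α by module]⟩
  refine ⟨Nat.find hex, fun j hj => ?_, Nat.find_spec hex⟩
  cases j with
  | zero => simpa using hβ
  | succ j => exact not_not.mp (Nat.find_min hex (by omega))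

theorem IsStringDepth.lt_of_sub_nsmul_notMem (h : IsStringDepth Δ α β r) {j : ℕ}
    (hj : β - j • α ∉ Δ) : r < j := by
  by_contra! hle
  exact hj (h.1 j hle)

theorem IsStringDepth.unique (h : IsStringDepth Δ α β r) (h' : IsStringDepth Δ α β r') :
    r = r' := by
  have := h.lt_of_sub_nsmul_notMem h'.2
  have := h'.lt_of_sub_nsmul_notMem h.2
  omega

theorem IsStringDepth.add_right (h : IsStringDepth Δ α β r) (hβα : β + α ∈ Δ) :
    IsStringDepth Δ α (β + α) (r + 1) := by
  refine ⟨fun j hj => ?_, ?_⟩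
  · cases j with
    | zero => simpa using hβα
    | succ j => rw [show β + α - (j + 1) • α = β - j • α by module]; exact h.1 j (by omega)
  · rw [show β + α - (r + 1 + 1) • α = β - (r + 1) • α by module]; exact h.2

end RootString

section DividedPowers

variable {R M : Type*} [CommRing R] [AddCommGroup M] [Module R M]

theorem pow_apply_mem_factorial_smul_of_pow_three_eq_zero {T : Module.End R M}
    {L : Submodule ℤ M} {x : M} (h0 : x ∈ L) (h1 : T x ∈ L) (h2 : T (T x) ∈ (2 : R) • L)
    (h3 : T (T (T x)) = 0) (n : ℕ) : (T ^ n) x ∈ ((n ! : ℕ) : R) • L := by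
  match n with
  | 0 => simpa using h0
  | 1 => simpa using h1
  | 2 => simpa [pow_two] using h2
  | n + 3 =>
    rw [pow_add, Module.End.mul_apply, show T ^ 3 = T * T * T by rw [pow_three, mul_assoc]]
    simp [h3]

theorem apply_mem_smul_span_of_forall_mem {S : Set M} (f : Module.End R M) (a : R)
    (h : ∀ x ∈ S, f x ∈ a • Submodule.span ℤ S) :
    ∀ v ∈ Submodule.span ℤ S, f v ∈ a • Submodule.span ℤ S :=
  fun _ hv =>
    (Submodule.span_le (p := (a • Submodule.span ℤ S).comap (f.restrictScalars ℤ))).mpr h hv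

end DividedPowers

section Lattice

variable {M : Type*} [AddCommGroup M] {ℓ : ℕ} {Δ : Finset (Fin ℓ → ℤ)} {H : Fin ℓ → M}
  {X : (Fin ℓ → ℤ) → M}

def chevalleyLattice (Δ : Finset (Fin ℓ → ℤ)) (H : Fin ℓ → M) (X : (Fin ℓ → ℤ) → M) :
    Submodule ℤ M :=
  Submodule.span ℤ (Set.range H ∪ X '' (Δ : Set (Fin ℓ → ℤ)))

theorem H_mem_chevalleyLattice (i : Fin ℓ) : H i ∈ chevalleyLattice Δ H X :=
  Submodule.subset_span (Or.inl ⟨i, rfl⟩)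

theorem X_mem_chevalleyLattice {β : Fin ℓ → ℤ} (hβ : β ∈ Δ) : X β ∈ chevalleyLattice Δ H X :=
  Submodule.subset_span (Or.inr ⟨β, hβ, rfl⟩)

end Lattice

section Chevalley

variable {g : Type*} [LieRing g] [LieAlgebra ℂ g] {ℓ : ℕ}

/-- The defining relations of a Chevalley basis: roots are recorded by their values `α(Hᵢ)`,
and `c α` holds the coordinates of the coroot `H_α = [X_α, X_{-α}]`. -/
structure IsChevalleySystem (Δ : Finset (Fin ℓ → ℤ)) (H : Fin ℓ → g) (X : (Fin ℓ → ℤ) → g)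
    (c : (Fin ℓ → ℤ) → (Fin ℓ → ℤ)) : Prop where
  zero_notMem : (0 : Fin ℓ → ℤ) ∉ Δ
  neg_mem : ∀ α ∈ Δ, -α ∈ Δ
  X_ne_zero : ∀ α ∈ Δ, X α ≠ 0
  lie_H_X : ∀ i, ∀ α ∈ Δ, ⁅H i, X α⁆ = (α i : ℂ) • X α
  lie_X_X_neg : ∀ α ∈ Δ, ⁅X α, X (-α)⁆ = ∑ i, (c α i : ℂ) • H i
  sum_coroot_mul : ∀ α ∈ Δ, ∑ i, c α i * α i = 2
  lie_X_X_of_add_mem : ∀ α ∈ Δ, ∀ β ∈ Δ, α + β ∈ Δ → ∃ (ε : ℤ) (r : ℕ), (ε = 1 ∨ ε = -1) ∧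
    IsStringDepth Δ α β r ∧ ⁅X α, X β⁆ = ((ε * (r + 1) : ℤ) : ℂ) • X (α + β)
  lie_X_X_of_add_notMem : ∀ α ∈ Δ, ∀ β ∈ Δ, α + β ≠ 0 → α + β ∉ Δ → ⁅X α, X β⁆ = 0

namespace IsChevalleySystem

open LieAlgebra

variable {Δ : Finset (Fin ℓ → ℤ)} {H : Fin ℓ → g} {X : (Fin ℓ → ℤ) → g}
  {c : (Fin ℓ → ℤ) → (Fin ℓ → ℤ)} {α β γ : Fin ℓ → ℤ}

theorem ne_zero_of_mem (hS : IsChevalleySystem Δ H X c) (hα : α ∈ Δ) : α ≠ 0 :=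
  fun h => hS.zero_notMem (h ▸ hα)

theorem eq_of_intCast_smul_X_eq (hS : IsChevalleySystem Δ H X c) (hβ : β ∈ Δ) {a b : ℤ}
    (h : (a : ℂ) • X β = (b : ℂ) • X β) : a = b :=
  Int.cast_injective (smul_left_injective ℂ (hS.X_ne_zero β hβ) h)

theorem lie_X_H (hS : IsChevalleySystem Δ H X c) (hα : α ∈ Δ) (i : Fin ℓ) :
    ⁅X α, H i⁆ = ((-α i : ℤ) : ℂ) • X α := by
  rw [← lie_skew, hS.lie_H_X i α hα, Int.cast_neg, neg_smul]

theorem lie_lie_X_X_neg (hS : IsChevalleySystem Δ H X c) (hγ : γ ∈ Δ) (hβ : β ∈ Δ) :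
    ⁅⁅X γ, X (-γ)⁆, X β⁆ = ((∑ i, c γ i * β i : ℤ) : ℂ) • X β := by
  simp only [hS.lie_X_X_neg γ hγ, sum_lie, smul_lie, hS.lie_H_X _ β hβ, smul_smul,
    ← Finset.sum_smul]
  push_cast
  rfl

theorem add_three_nsmul_mem (hS : IsChevalleySystem Δ H X c) (hγ : γ ∈ Δ) {m : ℕ}
    (hA : (m + 2) • γ ∈ Δ) : (m + 3) • γ ∈ Δ := by
  by_contra hnot
  have hγ0 := hS.ne_zero_of_mem hγ
  have hJ : ((2 * (m + 2) : ℤ) : ℂ) • X ((m + 2) • γ) =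
      ⁅X γ, ⁅X (-γ), X ((m + 2) • γ)⁆⁆ := by
    have hsum : ∑ i, c γ i * ((m + 2) • γ) i = 2 * (m + 2) := by
      simp only [Pi.smul_apply, nsmul_eq_mul, mul_left_comm _ ((m + 2 : ℕ) : ℤ),
        ← Finset.mul_sum, hS.sum_coroot_mul γ hγ]
      push_cast
      ring
    have hzero : ⁅X γ, X ((m + 2) • γ)⁆ = 0 := by
      have hadd : γ + (m + 2) • γ = (m + 3) • γ := by module
      refine hS.lie_X_X_of_add_notMem γ hγ _ hA ?_ (hadd ▸ hnot)
      rw [hadd]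
      exact (nsmul_eq_zero_iff_left hγ0).not.mpr (by omega)
    rw [← hsum, ← hS.lie_lie_X_X_neg hγ hA, lie_lie, hzero, lie_zero, sub_zero]
  have hB : -γ + (m + 2) • γ = (m + 1) • γ := by module
  have hB' : γ + (m + 1) • γ = (m + 2) • γ := by module
  by_cases hmem : (m + 1) • γ ∈ Δ
  · obtain ⟨ε, r, hε, hr, hbr⟩ :=
      hS.lie_X_X_of_add_mem _ (hS.neg_mem γ hγ) _ hA (hB ▸ hmem)
    obtain rfl : r = 0 := Nat.lt_one_iff.mp <| hr.lt_of_sub_nsmul_notMem <| by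
      rwa [show (m + 2) • γ - 1 • -γ = (m + 3) • γ by module]
    obtain ⟨ε', r', hε', hr', hbr'⟩ := hS.lie_X_X_of_add_mem _ hγ _ hmem (hB'.symm ▸ hA)
    have hr'm : r' < m + 1 := hr'.lt_of_sub_nsmul_notMem (by rw [sub_self]; exact hS.zero_notMem)
    rw [hbr, hB, lie_smul, hbr', hB', smul_smul, ← Int.cast_mul] at hJ
    have := hS.eq_of_intCast_smul_X_eq hA hJ
    rcases hε with rfl | rfl <;> rcases hε' with rfl | rfl <;> omega
  · have hne : -γ + (m + 2) • γ ≠ 0 :=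
      hB ▸ (nsmul_eq_zero_iff_left hγ0).not.mpr (by omega)
    rw [hS.lie_X_X_of_add_notMem _ (hS.neg_mem γ hγ) _ hA hne (hB ▸ hmem), lie_zero] at hJ
    exact hS.X_ne_zero _ hA ((smul_eq_zero.mp hJ).resolve_left (by norm_cast))

theorem nsmul_notMem (hS : IsChevalleySystem Δ H X c) (hγ : γ ∈ Δ) {m : ℕ} (hm : 2 ≤ m) :
    m • γ ∉ Δ := by
  intro hmem
  have hall (k : ℕ) : (m + k) • γ ∈ Δ := by
    induction k with
    | zero => simpa using hmem
    | succ k ih =>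
      obtain ⟨m', hm'⟩ : ∃ m', m + k = m' + 2 := ⟨m + k - 2, by omega⟩
      rw [show m + (k + 1) = m' + 3 by omega]
      exact hS.add_three_nsmul_mem hγ (hm' ▸ ih)
  obtain ⟨k, hk⟩ := exists_add_nsmul_notMem Δ (hS.ne_zero_of_mem hγ) (m • γ)
  exact hk (by rw [← add_nsmul]; exact hall k)

theorem ad_pow_X_eq_zero_or (hS : IsChevalleySystem Δ H X c) (hα : α ∈ Δ) (hβ : β ∈ Δ)
    (hβα : β ≠ -α) {q : ℕ} (hq : IsStringDepth Δ α β q) (n : ℕ) :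
    (ad ℂ g (X α) ^ n) (X β) = 0 ∨
      β + n • α ∈ Δ ∧ IsStringDepth Δ α (β + n • α) (q + n) ∧
        ∃ z : ℤ, (ad ℂ g (X α) ^ n) (X β) =
          ((z * (q + n).descFactorial n : ℤ) : ℂ) • X (β + n • α) := by
  induction n with
  | zero => exact Or.inr ⟨by simpa using hβ, by simpa using hq, 1, by simp⟩
  | succ n ih =>
    rw [pow_succ', Module.End.mul_apply, ad_apply]
    obtain h | ⟨hmem, hdepth, z, hz⟩ := ih
    · exact Or.inl (by rw [h, lie_zero])
    have hadd : α + (β + n • α) = β + (n + 1) • α := by module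
    have hne : α + (β + n • α) ≠ 0 := by
      intro h
      have hβ' : β = (n + 1) • -α := by linear_combination (norm := module) h
      rcases n with _ | n
      · exact hβα (by simpa using hβ')
      · exact hS.nsmul_notMem (hS.neg_mem α hα) (by omega) (hβ' ▸ hβ)
    rw [hz, lie_smul]
    by_cases hnext : α + (β + n • α) ∈ Δ
    · obtain ⟨ε, r, hε, hr, hbr⟩ := hS.lie_X_X_of_add_mem α hα _ hmem hnext
      obtain rfl := hr.unique hdepth
      refine Or.inr ⟨hadd ▸ hnext, ?_, z * ε, ?_⟩
      · rw [succ_nsmul, ← add_assoc, ← add_assoc]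
        exact hdepth.add_right (by rwa [add_comm])
      · rw [hbr, hadd, smul_smul, ← add_assoc, Nat.succ_descFactorial_succ]
        push_cast
        ring_nf
    · exact Or.inl (by rw [hS.lie_X_X_of_add_notMem α hα _ hmem hne hnext, smul_zero])

theorem ad_pow_X_mem_factorial_smul (hS : IsChevalleySystem Δ H X c) (hα : α ∈ Δ) (hβ : β ∈ Δ)
    (hβα : β ≠ -α) (n : ℕ) :
    (ad ℂ g (X α) ^ n) (X β) ∈ ((n ! : ℕ) : ℂ) • chevalleyLattice Δ H X := by
  obtain ⟨q, hq⟩ := exists_isStringDepth (hS.ne_zero_of_mem hα) hβ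
  obtain h | ⟨hmem, -, z, hz⟩ := hS.ad_pow_X_eq_zero_or hα hβ hβα hq n
  · rw [h]
    exact zero_mem _
  obtain ⟨d, hd⟩ := Nat.factorial_dvd_descFactorial (q + n) n
  refine (Submodule.mem_smul_pointwise_iff_exists _ _ _).mpr
    ⟨(z * d) • X (β + n • α), Submodule.smul_mem _ _ (X_mem_chevalleyLattice hmem), ?_⟩
  rw [hz, hd, ← Int.cast_smul_eq_zsmul ℂ, smul_smul]
  push_cast
  ring_nf

theorem ad_pow_H_mem_factorial_smul (hS : IsChevalleySystem Δ H X c) (hα : α ∈ Δ) (i : Fin ℓ)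
    (n : ℕ) : (ad ℂ g (X α) ^ n) (H i) ∈ ((n ! : ℕ) : ℂ) • chevalleyLattice Δ H X := by
  have h1 : ad ℂ g (X α) (H i) = (-α i) • X α := by
    rw [ad_apply, hS.lie_X_H hα i, Int.cast_smul_eq_zsmul]
  have h2 : ad ℂ g (X α) (ad ℂ g (X α) (H i)) = 0 := by
    rw [h1, map_zsmul, ad_apply, lie_self, smul_zero]
  refine pow_apply_mem_factorial_smul_of_pow_three_eq_zero (H_mem_chevalleyLattice i) ?_ ?_ ?_ n
  · rw [h1]
    exact Submodule.smul_mem _ _ (X_mem_chevalleyLattice hα)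
  · rw [h2]
    exact zero_mem _
  · rw [h2, map_zero]

theorem ad_pow_X_neg_mem_factorial_smul (hS : IsChevalleySystem Δ H X c) (hα : α ∈ Δ)
    (n : ℕ) : (ad ℂ g (X α) ^ n) (X (-α)) ∈ ((n ! : ℕ) : ℂ) • chevalleyLattice Δ H X := by
  have h1 : ad ℂ g (X α) (X (-α)) = ∑ i, c α i • H i := by
    simp only [ad_apply, hS.lie_X_X_neg α hα, Int.cast_smul_eq_zsmul]
  have h2 : ad ℂ g (X α) (ad ℂ g (X α) (X (-α))) = (2 : ℂ) • -X α := by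
    rw [ad_apply, ad_apply, ← lie_skew, hS.lie_lie_X_X_neg hα hα, hS.sum_coroot_mul α hα,
      smul_neg, Int.cast_two]
  refine pow_apply_mem_factorial_smul_of_pow_three_eq_zero
    (X_mem_chevalleyLattice (hS.neg_mem α hα)) ?_ ?_ ?_ n
  · rw [h1]
    exact Submodule.sum_mem _ fun i _ => Submodule.smul_mem _ _ (H_mem_chevalleyLattice i)
  · rw [h2]
    exact Submodule.smul_mem_pointwise_smul _ _ _ (Submodule.neg_mem _ (X_mem_chevalleyLattice hα))
  · rw [h2, map_smul, map_neg, ad_apply, lie_self, neg_zero, smul_zero]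

theorem ad_pow_mem_factorial_smul (hS : IsChevalleySystem Δ H X c) (hα : α ∈ Δ) (n : ℕ) :
    ∀ v ∈ chevalleyLattice Δ H X,
      (ad ℂ g (X α) ^ n) v ∈ ((n ! : ℕ) : ℂ) • chevalleyLattice Δ H X := by
  refine apply_mem_smul_span_of_forall_mem _ _ ?_
  rintro _ (⟨i, rfl⟩ | ⟨β, hβ, rfl⟩)
  · exact hS.ad_pow_H_mem_factorial_smul hα i n
  by_cases hβα : β = -α
  · exact hβα ▸ hS.ad_pow_X_neg_mem_factorial_smul hα n
  · exact hS.ad_pow_X_mem_factorial_smul hα hβ hβα n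

end IsChevalleySystem

end Chevalley

theorem stmt7_general {g : Type*} [LieRing g] [LieAlgebra ℂ g]
    {ℓ : ℕ} (Δ : Finset (Fin ℓ → ℤ))
    (H : Fin ℓ → g) (X : (Fin ℓ → ℤ) → g)
    (b : Module.Basis (Fin ℓ ⊕ {α : Fin ℓ → ℤ // α ∈ Δ}) ℂ g)
    (hbX : ∀ α : {α : Fin ℓ → ℤ // α ∈ Δ}, b (Sum.inr α) = X α.1)
    (h0 : (0 : Fin ℓ → ℤ) ∉ Δ)
    (hneg : ∀ α ∈ Δ, -α ∈ Δ)
    (hHX : ∀ i, ∀ α ∈ Δ, ⁅H i, X α⁆ = (α i : ℂ) • X α)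
    (c : (Fin ℓ → ℤ) → (Fin ℓ → ℤ))
    (hcoroot : ∀ α ∈ Δ, ⁅X α, X (-α)⁆ = ∑ i, (c α i : ℂ) • H i)
    (hc2 : ∀ α ∈ Δ, (∑ i, c α i * α i) = 2)
    (hXX : ∀ α ∈ Δ, ∀ β ∈ Δ, α + β ≠ 0 →
      ((α + β ∈ Δ → ∃ (ε : ℤ) (r : ℕ), (ε = 1 ∨ ε = -1)
          ∧ (∀ j : ℕ, j ≤ r → β - j • α ∈ Δ) ∧ β - (r + 1) • α ∉ Δ
          ∧ ⁅X α, X β⁆ = ((ε * (r + 1) : ℤ) : ℂ) • X (α + β))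
        ∧ (α + β ∉ Δ → ⁅X α, X β⁆ = 0))) :
    ∀ α ∈ Δ, ∀ n : ℕ,
      ∀ v ∈ Submodule.span ℤ (Set.range H ∪ X '' ((Δ : Finset (Fin ℓ → ℤ)) : Set (Fin ℓ → ℤ))),
        ∃ w ∈ Submodule.span ℤ (Set.range H ∪ X '' ((Δ : Finset (Fin ℓ → ℤ)) : Set (Fin ℓ → ℤ))),
          ((LieAlgebra.ad ℂ g (X α)) ^ n) v = ((Nat.factorial n : ℕ) : ℂ) • w := by
  have hS : IsChevalleySystem Δ H X c :=
    { zero_notMem := h0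
      neg_mem := hneg
      X_ne_zero := fun α hα => hbX ⟨α, hα⟩ ▸ b.ne_zero (Sum.inr ⟨α, hα⟩)
      lie_H_X := hHX
      lie_X_X_neg := hcoroot
      sum_coroot_mul := hc2
      lie_X_X_of_add_mem := fun α hα β hβ hαβ => by
        obtain ⟨ε, r, hε, hdown, hstop, hlie⟩ := (hXX α hα β hβ (ne_of_mem_of_not_mem hαβ h0)).1 hαβ
        exact ⟨ε, r, hε, ⟨hdown, hstop⟩, hlie⟩
      lie_X_X_of_add_notMem := fun α hα β hβ hne => (hXX α hα β hβ hne).2 }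
  intro α hα n v hv
  obtain ⟨w, hw, hwv⟩ :=
    (Submodule.mem_smul_pointwise_iff_exists _ _ _).mp (hS.ad_pow_mem_factorial_smul hα n v hv)
  exact ⟨w, hw, hwv.symm⟩

/-- Let `g` be a complex semisimple Lie algebra with Chevalley basis
`B = {H₁,…,H_ℓ} ∪ {X_α : α ∈ Δ}` (encoded by its defining relations: roots `α`
recorded by their integer values `α(Hᵢ)`, `[Hᵢ,Hⱼ] = 0`, `[Hᵢ,X_α] = α(Hᵢ)X_α`,
`[X_α, X_{-α}] = H_α` an integral combination of the `Hᵢ` with `α(H_α) = 2`, and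
`[X_α,X_β] = ±(r+1)X_{α+β}` with `r` the length of the `α`-string through `β`).
Then for each root `α` and all `n ≥ 0`, the divided power `(ad X_α)ⁿ/n!` maps the
`ℤ`-span `g_ℤ` of `B` into itself. -/
theorem stmt7 {g : Type*} [LieRing g] [LieAlgebra ℂ g]
    {ℓ : ℕ} (Δ : Finset (Fin ℓ → ℤ))
    (H : Fin ℓ → g) (X : (Fin ℓ → ℤ) → g)
    (b : Module.Basis (Fin ℓ ⊕ {α : Fin ℓ → ℤ // α ∈ Δ}) ℂ g)
    (hbH : ∀ i, b (Sum.inl i) = H i)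
    (hbX : ∀ α : {α : Fin ℓ → ℤ // α ∈ Δ}, b (Sum.inr α) = X α.1)
    (h0 : (0 : Fin ℓ → ℤ) ∉ Δ)
    (hneg : ∀ α ∈ Δ, -α ∈ Δ)
    (hHH : ∀ i j, ⁅H i, H j⁆ = 0)
    (hHX : ∀ i, ∀ α ∈ Δ, ⁅H i, X α⁆ = (α i : ℂ) • X α)
    (c : (Fin ℓ → ℤ) → (Fin ℓ → ℤ))
    (hcoroot : ∀ α ∈ Δ, ⁅X α, X (-α)⁆ = ∑ i, (c α i : ℂ) • H i)
    (hc2 : ∀ α ∈ Δ, (∑ i, c α i * α i) = 2)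
    (hXX : ∀ α ∈ Δ, ∀ β ∈ Δ, α + β ≠ 0 →
      ((α + β ∈ Δ → ∃ (ε : ℤ) (r : ℕ), (ε = 1 ∨ ε = -1)
          ∧ (∀ j : ℕ, j ≤ r → β - j • α ∈ Δ) ∧ β - (r + 1) • α ∉ Δ
          ∧ ⁅X α, X β⁆ = ((ε * (r + 1) : ℤ) : ℂ) • X (α + β))
        ∧ (α + β ∉ Δ → ⁅X α, X β⁆ = 0))) :
    ∀ α ∈ Δ, ∀ n : ℕ,
      ∀ v ∈ Submodule.span ℤ (Set.range H ∪ X '' ((Δ : Finset (Fin ℓ → ℤ)) : Set (Fin ℓ → ℤ))),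
        ∃ w ∈ Submodule.span ℤ (Set.range H ∪ X '' ((Δ : Finset (Fin ℓ → ℤ)) : Set (Fin ℓ → ℤ))),
          ((LieAlgebra.ad ℂ g (X α)) ^ n) v = ((Nat.factorial n : ℕ) : ℂ) • w :=
  stmt7_general Δ H X b hbX h0 hneg hHX c hcoroot hc2 hXX
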